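/- arXiv:1511.04246 — 6 statements merged into one kernel-verified Lean document; each statement's English description precedes it below -/
import Mathlib

section
/- Let q(z) = Σ_{n≥1} aₙ z^{n-1} be a power series converging for |z| < R, let δ ∈ ℂ, and let (cₙ) satisfy c₀ = 1 and -2n(n-δ)cₙ = Σ_{j=0}^{n-1} a_{n-j}c_j for all n ≥ 1 with 2n(n-δ) ≠ 0 (assume the recursion is consistent where 2n(n-δ) = 0). Then the power series Σ cₙ zⁿ converges for |z| < R. -/
/-!
Fix `‖z‖ < ρ < R` and let `S = Σ ‖aₘ₊₁‖ ρᵐ`. Multiplying the recursion by `ρⁿ` gives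
`2n‖n - δ‖ ‖cₙ‖ ρⁿ ≤ ρ S max_{j<n} ‖cⱼ‖ ρʲ`, and `n‖n - δ‖` eventually exceeds `ρ S`, so from
then on `‖cₙ‖ ρⁿ` is at most half the previous maximum. Hence `‖cₙ‖ ρⁿ` is bounded and
`Σ cₙ zⁿ` is dominated by a geometric series in `‖z‖ / ρ`.
-/

open Finset Filter

theorem summable_mul_pow_of_norm_mul_pow_le {𝕜 : Type*} [NormedField 𝕜] [CompleteSpace 𝕜]
    {c : ℕ → 𝕜} {ρ M : ℝ} (hc : ∀ n, ‖c n‖ * ρ ^ n ≤ M) {z : 𝕜} (hz : ‖z‖ < ρ) :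
    Summable fun n => c n * z ^ n := by
  have hρ : 0 < ρ := (norm_nonneg z).trans_lt hz
  have hgeom : Summable fun n => M * (‖z‖ / ρ) ^ n :=
    (summable_geometric_of_lt_one (by positivity) ((div_lt_one hρ).mpr hz)).mul_left M
  refine hgeom.of_norm_bounded fun n => ?_
  calc ‖c n * z ^ n‖ = ‖c n‖ * ρ ^ n * (‖z‖ / ρ) ^ n := by
        rw [norm_mul, norm_pow, div_pow, mul_assoc, mul_div_cancel₀ _ (by positivity)]
    _ ≤ M * (‖z‖ / ρ) ^ n := by gcongr; exact hc n

theorem norm_sum_mul_mul_pow_le {R : Type*} [SeminormedRing R] (a c : ℕ → R) {ρ M : ℝ}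
    (hρ : 0 ≤ ρ) {n : ℕ} (hc : ∀ j < n, ‖c j‖ * ρ ^ j ≤ M) :
    ‖∑ j ∈ range n, a (n - j) * c j‖ * ρ ^ n ≤
      ρ * (∑ j ∈ range n, ‖a (j + 1)‖ * ρ ^ j) * M := by
  calc ‖∑ j ∈ range n, a (n - j) * c j‖ * ρ ^ n
      ≤ (∑ j ∈ range n, ‖a (n - j)‖ * ‖c j‖) * ρ ^ n := by
        gcongr
        exact (norm_sum_le _ _).trans (sum_le_sum fun j _ => norm_mul_le _ _)
    _ = ∑ j ∈ range n, ρ * (‖a (n - 1 - j + 1)‖ * ρ ^ (n - 1 - j)) * (‖c j‖ * ρ ^ j) := by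
        rw [sum_mul]
        refine sum_congr rfl fun j hj => ?_
        have hj : j < n := mem_range.mp hj
        rw [show n - 1 - j + 1 = n - j by omega,
          show ρ ^ n = ρ * ρ ^ (n - 1 - j) * ρ ^ j by rw [← pow_succ', ← pow_add]; congr 1; omega]
        ring
    _ ≤ ∑ j ∈ range n, ρ * (‖a (n - 1 - j + 1)‖ * ρ ^ (n - 1 - j)) * M := by
        gcongr with j hj
        exact hc j (mem_range.mp hj)
    _ = ρ * (∑ j ∈ range n, ‖a (j + 1)‖ * ρ ^ j) * M := by
        rw [← sum_mul, ← mul_sum, sum_range_reflect (fun j => ‖a (j + 1)‖ * ρ ^ j) n]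

theorem eventually_lt_natCast_mul_norm_natCast_sub (δ : ℂ) (K : ℝ) :
    ∀ᶠ n : ℕ in atTop, K < n * ‖(n : ℂ) - δ‖ := by
  filter_upwards [tendsto_natCast_atTop_atTop.eventually_ge_atTop (max K 0 + ‖δ‖ + 1)] with n hn
  have hsub : (n : ℝ) - ‖δ‖ ≤ ‖(n : ℂ) - δ‖ := by
    simpa using norm_sub_norm_le (n : ℂ) δ
  nlinarith [le_max_left K 0, le_max_right K 0, norm_nonneg δ]

section Recursion

variable {δ : ℂ} {a c : ℕ → ℂ}

theorem norm_mul_pow_le_half_of_recursion {ρ S M : ℝ} (hρ : 0 ≤ ρ) (hM : 0 ≤ M) {n : ℕ}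
    (hrec : -(2 * (n : ℂ) * ((n : ℂ) - δ)) * c n = ∑ j ∈ range n, a (n - j) * c j)
    (hS : ∑ j ∈ range n, ‖a (j + 1)‖ * ρ ^ j ≤ S) (hn : ρ * S < n * ‖(n : ℂ) - δ‖)
    (hc : ∀ j < n, ‖c j‖ * ρ ^ j ≤ M) :
    ‖c n‖ * ρ ^ n ≤ M / 2 := by
  have hS0 : 0 ≤ S := (sum_nonneg fun j _ => by positivity).trans hS
  have hconv := norm_sum_mul_mul_pow_le a c hρ hc
  rw [← hrec, norm_mul, norm_neg, norm_mul, norm_mul] at hconv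
  simp only [Complex.norm_ofNat, Complex.norm_natCast] at hconv
  have hρS : ρ * (∑ j ∈ range n, ‖a (j + 1)‖ * ρ ^ j) * M ≤ n * ‖(n : ℂ) - δ‖ * M := by
    exact mul_le_mul_of_nonneg_right ((mul_le_mul_of_nonneg_left hS hρ).trans hn.le) hM
  have hpos : 0 < (n : ℝ) * ‖(n : ℂ) - δ‖ := (mul_nonneg hρ hS0).trans_lt hn
  nlinarith

theorem exists_norm_mul_pow_le_of_recursion
    (hrec : ∀ n : ℕ, 1 ≤ n →
      -(2 * (n : ℂ) * ((n : ℂ) - δ)) * c n = ∑ j ∈ range n, a (n - j) * c j)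
    {ρ S : ℝ} (hρ : 0 ≤ ρ) (hS : ∀ n, ∑ j ∈ range n, ‖a (j + 1)‖ * ρ ^ j ≤ S) :
    ∃ M, ∀ n, ‖c n‖ * ρ ^ n ≤ M := by
  obtain ⟨N, hN⟩ := eventually_atTop.mp
    ((eventually_ge_atTop 1).and (eventually_lt_natCast_mul_norm_natCast_sub δ (ρ * S)))
  set M := ∑ j ∈ range N, ‖c j‖ * ρ ^ j
  have hM : 0 ≤ M := sum_nonneg fun j _ => by positivity
  refine ⟨M, fun n => ?_⟩
  induction n using Nat.strong_induction_on with
  | _ n ih =>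
    rcases lt_or_ge n N with hn | hn
    · exact single_le_sum (f := fun j => ‖c j‖ * ρ ^ j) (fun j _ => by positivity)
        (mem_range.mpr hn)
    · obtain ⟨hn1, hnδ⟩ := hN n hn
      exact (norm_mul_pow_le_half_of_recursion hρ hM (hrec n hn1) (hS n) hnδ ih).trans
        (half_le_self hM)

end Recursion

theorem formal_solution_converges_general (R : ℝ) (δ : ℂ) (a c : ℕ → ℂ)
    (ha : ∀ z : ℂ, ‖z‖ < R → Summable (fun n : ℕ => a (n + 1) * z ^ n))
    (hrec : ∀ n : ℕ, 1 ≤ n →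
      -(2 * (n : ℂ) * ((n : ℂ) - δ)) * c n = ∑ j ∈ range n, a (n - j) * c j) :
    ∀ z : ℂ, ‖z‖ < R → Summable (fun n : ℕ => c n * z ^ n) := by
  intro z hz
  set ρ := (‖z‖ + R) / 2 with hρ_def
  have hzρ : ‖z‖ < ρ := by linarith
  have hρR : ρ < R := by linarith
  have hρ : 0 ≤ ρ := (norm_nonneg z).trans hzρ.le
  have hnorm : Summable fun n => ‖a (n + 1)‖ * ρ ^ n := by
    simpa [norm_mul, norm_pow, abs_of_nonneg hρ] using
      (ha ρ (by simpa [abs_of_nonneg hρ] using hρR)).norm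
  obtain ⟨M, hM⟩ := exists_norm_mul_pow_le_of_recursion hrec hρ
    fun n => hnorm.sum_le_tsum (range n) fun j _ => by positivity
  exact summable_mul_pow_of_norm_mul_pow_le hM hzρ

/-- Convergence of the formal solution: if `q(z) = Σ_{n≥1} aₙ z^{n-1}` converges for
`‖z‖ < R` and `(cₙ)` satisfies the recursion `-2n(n-δ)cₙ = Σ_{j<n} a_{n-j} c_j`, then
`Σ cₙ zⁿ` converges for `‖z‖ < R`. -/
theorem formal_solution_converges (R : ℝ) (hR : 0 < R) (δ : ℂ) (a c : ℕ → ℂ)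
    (ha : ∀ z : ℂ, ‖z‖ < R → Summable (fun n : ℕ => a (n + 1) * z ^ n))
    (hc0 : c 0 = 1)
    (hrec : ∀ n : ℕ, 1 ≤ n →
      -(2 * (n : ℂ) * ((n : ℂ) - δ)) * c n = ∑ j ∈ range n, a (n - j) * c j) :
    ∀ z : ℂ, ‖z‖ < R → Summable (fun n : ℕ => c n * z ^ n) :=
  formal_solution_converges_general R δ a c ha hrec
end

section
/- Let d ≥ 1 be an integer, q(z) = a₁ + a₂z + ⋯ a formal power series, and kⱼ = 2j(j-d) for 1 ≤ j ≤ d-1. Then there exists a formal power series solution g(z) = 1 + c₁z + ⋯ of 2(d-1)g' - 2zg'' = qg if and only if the d×d determinant with first column (a₁,…,a_d)ᵀ, and whose (i,j) entry for j ≥ 2 equals a_{i-j+1} if i ≥ j and k_{j-1}·[i = j-1] on the superdiagonal (i.e., the matrix with rows (aᵢ, a_{i-1}, …, a₁ or kⱼ in the appropriate band) as in the paper), vanishes. -/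
/-!
Comparing coefficients of `zⁿ`, the ODE for `g = ∑ cₙ zⁿ` becomes the recurrence
`k_{n+1} c_{n+1} + ∑_{j ≤ n} a_{n-j+1} c_j = 0`, and its first `d` equations are exactly
`M (c₀, …, c_{d-1})ᵀ = 0`, the unknown `c_d` dropping out because `k_d = 0`. As `kₙ ≠ 0` for
`n ≠ d`, a kernel vector of `M` has `c₀ ≠ 0` (otherwise the equations force it to vanish), and it
continues to a solution of all equations by solving the `n`-th one for `c_{n+1}` when `n ≥ d`.
-/

open PowerSeries Finset Matrix

section Recurrence

variable {R : Type*} [CommRing R] {a k : ℕ → R}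

def recurrenceDefect (a k c : ℕ → R) (n : ℕ) : R :=
  k n * c (n + 1) + ∑ j ∈ range (n + 1), a (n - j + 1) * c j

lemma recurrenceDefect_congr {c c' : ℕ → R} {n : ℕ} (h : ∀ j ≤ n + 1, c j = c' j) :
    recurrenceDefect a k c n = recurrenceDefect a k c' n := by
  unfold recurrenceDefect
  rw [h (n + 1) le_rfl, sum_congr rfl fun j hj => by rw [h j (by grind)]]

lemma recurrenceDefect_smul (r : R) (c : ℕ → R) (n : ℕ) :
    recurrenceDefect a k (r • c) n = r * recurrenceDefect a k c n := by
  simp only [recurrenceDefect, Pi.smul_apply, smul_eq_mul, mul_add, mul_sum]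
  congr 1
  · ring
  · exact sum_congr rfl fun _ _ => by ring

def extendByZero {d : ℕ} (v : Fin d → R) (n : ℕ) : R :=
  if h : n < d then v ⟨n, h⟩ else 0

lemma recurrenceDefect_extendByZero {d n : ℕ} (c : ℕ → R) (hkd : k (d - 1) = 0) (hn : n < d) :
    recurrenceDefect a k (extendByZero fun i : Fin d => c i) n = recurrenceDefect a k c n := by
  by_cases hlt : n + 1 < d
  · exact recurrenceDefect_congr fun j hj => by simp [extendByZero, show j < d by omega]
  · have hkn : k n = 0 := by rwa [show n = d - 1 by omega]
    simp only [recurrenceDefect, hkn, zero_mul, zero_add]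
    exact sum_congr rfl fun j hj => by
      simp [extendByZero, show j < d by grind]

lemma eq_zero_of_recurrenceDefect_eq_zero [NoZeroDivisors R] {c : ℕ → R} {m : ℕ}
    (hk : ∀ n < m, k n ≠ 0) (hc0 : c 0 = 0) (hc : ∀ n < m, recurrenceDefect a k c n = 0) :
    ∀ n ≤ m, c n = 0 := by
  intro n
  induction n using Nat.strong_induction_on with
  | _ n ih =>
    intro hn
    cases n with
    | zero => exact hc0
    | succ n =>
      have hsum : ∑ j ∈ range (n + 1), a (n - j + 1) * c j = 0 :=
        sum_eq_zero fun j hj => by rw [ih j (by grind) (by grind), mul_zero]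
      have := hc n (by omega)
      rw [recurrenceDefect, hsum, add_zero] at this
      exact (mul_eq_zero.mp this).resolve_left (hk n (by omega))

def hessenbergMatrix (d : ℕ) (a k : ℕ → R) : Matrix (Fin d) (Fin d) R :=
  of fun i j => if (j : ℕ) ≤ i then a (i - j + 1) else if (j : ℕ) = i + 1 then k i else 0

lemma hessenbergMatrix_mulVec {d : ℕ} (v : Fin d → R) (i : Fin d) :
    (hessenbergMatrix d a k *ᵥ v) i = recurrenceDefect a k (extendByZero v) i := by
  set f : ℕ → R := fun n =>
    (if n ≤ i then a (i - n + 1) else if n = i + 1 then k i else 0) * extendByZero v n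
  have hrow : (hessenbergMatrix d a k *ᵥ v) i = ∑ n ∈ range d, f n := by
    rw [← Fin.sum_univ_eq_sum_range]
    simp [f, mulVec, dotProduct, hessenbergMatrix, extendByZero]
  have hlower : ∑ n ∈ range (i + 1), f n = ∑ j ∈ range (i + 1), a (i - j + 1) * extendByZero v j :=
    sum_congr rfl fun n hn => by simp [f, show n ≤ i by grind]
  have hsuper : ∑ n ∈ Ico ((i : ℕ) + 1) d, f n = k i * extendByZero v (i + 1) := by
    rw [sum_eq_single (i + 1 : ℕ)]
    · simp [f]
    · intro n hn hne
      simp [f, show ¬ n ≤ i by grind, hne]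
    · intro hnot
      simp [f, extendByZero, show ¬ (i : ℕ) + 1 < d by grind]
  rw [hrow, ← sum_range_add_sum_Ico _ (show (i : ℕ) + 1 ≤ d from i.isLt), hlower, hsuper,
    recurrenceDefect, add_comm]

end Recurrence

section Prolongation

variable {F : Type*} [Field F] {a k : ℕ → F}

def prolongSolution (a k c : ℕ → F) (m : ℕ) : ℕ → F
  | 0 => c 0
  | n + 1 =>
    if n < m then c (n + 1)
    else -(k n)⁻¹ * ∑ j : Fin (n + 1), a (n - j + 1) * prolongSolution a k c m j
  decreasing_by exact j.isLt

lemma prolongSolution_of_le (c : ℕ → F) {m n : ℕ} (hn : n ≤ m) :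
    prolongSolution a k c m n = c n := by
  cases n with
  | zero => rw [prolongSolution]
  | succ n => rw [prolongSolution, if_pos (by omega)]

lemma recurrenceDefect_prolongSolution {c : ℕ → F} {m : ℕ} (hk : ∀ n, m ≤ n → k n ≠ 0)
    (hc : ∀ n < m, recurrenceDefect a k c n = 0) (n : ℕ) :
    recurrenceDefect a k (prolongSolution a k c m) n = 0 := by
  by_cases hn : n < m
  · rw [recurrenceDefect_congr fun j hj => prolongSolution_of_le c (show j ≤ m by omega), hc n hn]
  · rw [recurrenceDefect, prolongSolution, if_neg hn, Fin.sum_univ_eq_sum_range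
      (fun j => a (n - j + 1) * prolongSolution a k c m j), ← mul_assoc, mul_neg,
      mul_inv_cancel₀ (hk n (by omega)), neg_one_mul, neg_add_cancel]

theorem det_hessenbergMatrix_eq_zero_iff {d : ℕ} (hd : 1 ≤ d) (hkd : k (d - 1) = 0)
    (hk : ∀ n, n + 1 ≠ d → k n ≠ 0) :
    (hessenbergMatrix d a k).det = 0 ↔
      ∃ c : ℕ → F, c 0 = 1 ∧ ∀ n, recurrenceDefect a k c n = 0 := by
  rw [← exists_mulVec_eq_zero_iff]
  constructor
  · rintro ⟨v, hv, hMv⟩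
    have hc : ∀ n < d, recurrenceDefect a k (extendByZero v) n = 0 := fun n hn => by
      simpa [hessenbergMatrix_mulVec] using congrFun hMv ⟨n, hn⟩
    have hc0 : extendByZero v 0 ≠ 0 := fun h0 => hv <| funext fun i => by
      simpa [extendByZero] using eq_zero_of_recurrenceDefect_eq_zero (m := d - 1)
        (fun n hn => hk n (by omega)) h0 (fun n hn => hc n (by omega)) i (by omega)
    set c := prolongSolution a k (extendByZero v) d
    refine ⟨(c 0)⁻¹ • c, ?_, fun n => ?_⟩
    · simp [c, prolongSolution_of_le _ (Nat.zero_le d), hc0]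
    · rw [recurrenceDefect_smul, recurrenceDefect_prolongSolution (fun n hn => hk n (by omega)) hc,
        mul_zero]
  · rintro ⟨c, hc0, hc⟩
    refine ⟨fun i => c i, fun h => ?_, funext fun i => ?_⟩
    · simpa [hc0] using congrFun h ⟨0, hd⟩
    · rw [hessenbergMatrix_mulVec, recurrenceDefect_extendByZero c hkd i.isLt, hc, Pi.zero_apply]

end Prolongation

section Ode

variable {R : Type*} [CommRing R]

-- `odeK d n` is the paper's `k_{n+1} = 2(n+1)(n+1-d)`: rows are indexed from `0` here.
def odeK (d n : ℕ) : R := 2 * ((n : R) + 1) * ((n : R) + 1 - d)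

lemma odeK_pred_self {d : ℕ} (hd : 1 ≤ d) : odeK d (d - 1) = (0 : R) := by
  simp [odeK, Nat.cast_sub hd]

lemma odeK_ne_zero [NoZeroDivisors R] [CharZero R] {d n : ℕ} (hn : n + 1 ≠ d) :
    odeK d n ≠ (0 : R) := by
  have hsucc : (n : R) + 1 ≠ 0 := by exact_mod_cast n.succ_ne_zero
  have hsub : (n : R) + 1 - d ≠ 0 := sub_ne_zero.mpr (by exact_mod_cast hn)
  exact mul_ne_zero (mul_ne_zero two_ne_zero hsucc) hsub

lemma coeff_ode_lhs (d : ℕ) (g : R⟦X⟧) (n : ℕ) :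
    coeff n (C (2 * ((d : R) - 1)) * derivative R g - C 2 * X * derivative R (derivative R g))
      = -(odeK d n * coeff (n + 1) g) := by
  rw [map_sub, mul_assoc, coeff_C_mul, coeff_C_mul, coeff_derivative]
  cases n with
  | zero => rw [coeff_zero_X_mul, odeK]; push_cast; ring
  | succ n => rw [coeff_succ_X_mul, coeff_derivative, coeff_derivative, odeK]; push_cast; ring

lemma coeff_mk_succ_mul (a : ℕ → R) (g : R⟦X⟧) (n : ℕ) :
    coeff n (PowerSeries.mk (fun m => a (m + 1)) * g) =
      ∑ j ∈ range (n + 1), a (n - j + 1) * coeff j g := by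
  rw [mul_comm, coeff_mul, Nat.sum_antidiagonal_eq_sum_range_succ fun i j => coeff i g * coeff j _]
  simp [mul_comm]

lemma ode_iff_forall_recurrenceDefect_eq_zero (d : ℕ) (a : ℕ → R) (g : R⟦X⟧) :
    C (2 * ((d : R) - 1)) * derivative R g - C 2 * X * derivative R (derivative R g)
        = PowerSeries.mk (fun n => a (n + 1)) * g ↔
      ∀ n, recurrenceDefect a (odeK d) (fun m => coeff m g) n = 0 := by
  rw [PowerSeries.ext_iff]
  refine forall_congr' fun n => ?_
  rw [coeff_ode_lhs, coeff_mk_succ_mul, neg_eq_iff_add_eq_zero, recurrenceDefect]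

lemma exists_ode_solution_iff (d : ℕ) (a : ℕ → R) :
    (∃ g : R⟦X⟧, coeff 0 g = 1 ∧
        C (2 * ((d : R) - 1)) * derivative R g - C 2 * X * derivative R (derivative R g)
          = PowerSeries.mk (fun n => a (n + 1)) * g) ↔
      ∃ c : ℕ → R, c 0 = 1 ∧ ∀ n, recurrenceDefect a (odeK d) c n = 0 := by
  simp_rw [ode_iff_forall_recurrenceDefect_eq_zero]
  exact ⟨fun ⟨g, hg⟩ => ⟨fun m => coeff m g, hg⟩,
    fun ⟨c, hc⟩ => ⟨PowerSeries.mk c, by simpa using hc⟩⟩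

end Ode

/-- For integer `d ≥ 1`, the ODE `2(d-1)g' - 2zg'' = qg` has a formal power series solution
`g = 1 + c₁z + ⋯` iff the `d×d` determinant condition on `a₁,…,a_d` holds, where the matrix
has first column `(a₁,…,a_d)ᵀ`, superdiagonal entries `kᵢ = 2i(i-d)`, band entries
`a_{i-j+1}`, and zeros above the superdiagonal. -/
theorem ode_solvable_iff_det_vanishes (d : ℕ) (hd : 1 ≤ d) (a : ℕ → ℂ) :
    (∃ g : PowerSeries ℂ, PowerSeries.coeff 0 g = 1 ∧
        C (2 * ((d : ℂ) - 1)) * derivative ℂ g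
            - C 2 * X * derivative ℂ (derivative ℂ g)
          = PowerSeries.mk (fun n => a (n + 1)) * g)
    ↔ Matrix.det (Matrix.of fun i j : Fin d =>
        if (j : ℕ) ≤ (i : ℕ) then a ((i : ℕ) - (j : ℕ) + 1)
        else if (j : ℕ) = (i : ℕ) + 1 then
          2 * ((i : ℕ) + 1 : ℂ) * (((i : ℕ) + 1 : ℂ) - (d : ℂ))
        else 0) = 0 := by
  rw [exists_ode_solution_iff]
  exact (det_hessenbergMatrix_eq_zero_iff hd (odeK_pred_self hd) fun n hn => odeK_ne_zero hn).symm
end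

section
/- Given four distinct points a, b, c, d ∈ ℂ with cross ratio [a,b,c,d] = (a-c)(b-d)/((c-b)(d-a)), and w ∈ ℂ with w² = [a,b,c,d], the unique Möbius transformation M sending a ↦ w, b ↦ 1, c ↦ 0 also sends d ↦ 1+w. -/
/-!
Möbius maps preserve the cross ratio, so `x = M d` satisfies `[w, 1, 0, x] = w²`, i.e.
`w (x - 1) / (x - w) = w²`; distinctness of `a, b, c, d` gives `w ≠ 0, 1`, and then `x = 1 + w`.
`M d` is finite: if `d` were the pole of `M`, the cross ratio would degenerate to
`(M a - M c) / (M b - M c) = w`, forcing `w² = w`.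
-/

section CrossRatio

variable {K : Type*} [Field K]

/-- Vanishes (junk value) when `b = c` or `a = d`. -/
def crossRatio (a b c d : K) : K := (a - c) * (b - d) / ((c - b) * (d - a))

theorem crossRatio_ne_zero {a b c d : K} (hac : a ≠ c) (hbd : b ≠ d) (hbc : b ≠ c)
    (had : a ≠ d) : crossRatio a b c d ≠ 0 :=
  div_ne_zero (mul_ne_zero (sub_ne_zero.2 hac) (sub_ne_zero.2 hbd))
    (mul_ne_zero (sub_ne_zero.2 hbc.symm) (sub_ne_zero.2 had.symm))

theorem crossRatio_ne_one {a b c d : K} (hab : a ≠ b) (hcd : c ≠ d) :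
    crossRatio a b c d ≠ 1 := by
  intro h
  have hden : (c - b) * (d - a) ≠ 0 := by
    intro h0
    rw [crossRatio, h0, div_zero] at h
    exact zero_ne_one h
  rw [crossRatio, div_eq_one_iff_eq hden] at h
  have : (a - b) * (c - d) = 0 := by linear_combination h
  rcases mul_eq_zero.1 this with h | h
  · exact hab (sub_eq_zero.1 h)
  · exact hcd (sub_eq_zero.1 h)

theorem eq_one_add_of_crossRatio_eq_sq {w x : K} (hw₀ : w ≠ 0) (hw₁ : w ≠ 1)
    (h : crossRatio w 1 0 x = w ^ 2) : x = 1 + w := by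
  have hxw : x - w ≠ 0 := by
    intro hxw
    simp only [crossRatio, hxw, mul_zero, div_zero] at h
    exact hw₀ (pow_eq_zero_iff two_ne_zero |>.1 h.symm)
  rw [crossRatio, div_eq_iff (mul_ne_zero (by norm_num) hxw)] at h
  have : w * (1 - w) * (x - (1 + w)) = 0 := by linear_combination -h
  rcases mul_eq_zero.1 this with h | h
  · exact absurd h (mul_ne_zero hw₀ (sub_ne_zero.2 hw₁.symm))
  · exact sub_eq_zero.1 h

end CrossRatio

section Mobius

variable {K : Type*} [Field K] {α β γ δ : K}

theorem mobius_sub_mobius {z z' : K} (hz : γ * z + δ ≠ 0) (hz' : γ * z' + δ ≠ 0) :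
    (α * z + β) / (γ * z + δ) - (α * z' + β) / (γ * z' + δ) =
      (α * δ - β * γ) * (z - z') / ((γ * z + δ) * (γ * z' + δ)) := by
  rw [div_sub_div _ _ hz hz']
  ring

theorem crossRatio_mobius {a b c d : K} (hdet : α * δ - β * γ ≠ 0)
    (ha : γ * a + δ ≠ 0) (hb : γ * b + δ ≠ 0) (hc : γ * c + δ ≠ 0) (hd : γ * d + δ ≠ 0) :
    crossRatio ((α * a + β) / (γ * a + δ)) ((α * b + β) / (γ * b + δ))
      ((α * c + β) / (γ * c + δ)) ((α * d + β) / (γ * d + δ)) = crossRatio a b c d := by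
  rw [crossRatio, crossRatio, mobius_sub_mobius ha hc, mobius_sub_mobius hb hd,
    mobius_sub_mobius hc hb, mobius_sub_mobius hd ha]
  field_simp

theorem mobius_ratio_eq_crossRatio_of_pole {a b c d : K} (hdet : α * δ - β * γ ≠ 0)
    (ha : γ * a + δ ≠ 0) (hb : γ * b + δ ≠ 0) (hc : γ * c + δ ≠ 0) (hd : γ * d + δ = 0) :
    ((α * a + β) / (γ * a + δ) - (α * c + β) / (γ * c + δ)) /
      ((α * b + β) / (γ * b + δ) - (α * c + β) / (γ * c + δ)) = crossRatio a b c d := by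
  have hpole (z : K) : γ * z + δ = γ * (z - d) := by linear_combination hd
  rw [mobius_sub_mobius ha hc, mobius_sub_mobius hb hc, crossRatio, hpole a, hpole b, hpole c]
  rw [hpole] at ha hb hc
  obtain ⟨hγ, had⟩ := mul_ne_zero_iff.1 ha
  have hbd := right_ne_zero_of_mul hb
  have hcd := right_ne_zero_of_mul hc
  have hda : d - a ≠ 0 := by rwa [← neg_sub, neg_ne_zero]
  rcases eq_or_ne b c with rfl | hbc
  · simp
  have hbc' := sub_ne_zero.2 hbc
  field_simp
  ring

end Mobius

/-- If `w² = [a,b,c,d]` and `M` is a Möbius transformation with `M a = w`, `M b = 1`,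
`M c = 0`, then `M d = 1 + w`. -/
theorem mobius_sends_fourth_point (a b c d w : ℂ)
    (hab : a ≠ b) (hac : a ≠ c) (had : a ≠ d) (hbc : b ≠ c) (hbd : b ≠ d) (hcd : c ≠ d)
    (hw : w ^ 2 = (a - c) * (b - d) / ((c - b) * (d - a)))
    (α β γ δ : ℂ) (hdet : α * δ - β * γ ≠ 0)
    (hda : γ * a + δ ≠ 0) (hdb : γ * b + δ ≠ 0) (hdc : γ * c + δ ≠ 0)
    (hMa : (α * a + β) / (γ * a + δ) = w)
    (hMb : (α * b + β) / (γ * b + δ) = 1)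
    (hMc : (α * c + β) / (γ * c + δ) = 0) :
    γ * d + δ ≠ 0 ∧ (α * d + β) / (γ * d + δ) = 1 + w := by
  change w ^ 2 = crossRatio a b c d at hw
  have hw₀ : w ≠ 0 := by
    rintro rfl
    exact crossRatio_ne_zero hac hbd hbc had (by rw [← hw, zero_pow two_ne_zero])
  have hw₁ : w ≠ 1 := by
    rintro rfl
    exact crossRatio_ne_one hab hcd (by rw [← hw, one_pow])
  have hdd : γ * d + δ ≠ 0 := by
    intro hd
    have h := mobius_ratio_eq_crossRatio_of_pole hdet hda hdb hdc hd
    rw [hMa, hMb, hMc, ← hw] at h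
    have : w * (w - 1) = 0 := by linear_combination -h
    exact mul_ne_zero hw₀ (sub_ne_zero.2 hw₁) this
  refine ⟨hdd, eq_one_add_of_crossRatio_eq_sq hw₀ hw₁ ?_⟩
  have h := crossRatio_mobius hdet hda hdb hdc hdd
  rwa [hMa, hMb, hMc, ← hw] at h
end

section
/- For the family h_α(z) = (α(z³+2)+3z²)/(3αz+2z³+1) with α⁶ ≠ 1, the critical points of h_α are exactly 1, j, j², α² (where j = e^{2πi/3}), each simple, and the corresponding critical values are 1, j², j, (α⁴+2α)/(2α³+1). -/
open Polynomial Complex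

/-- For `h_α(z) = (α(z³+2)+3z²)/(3αz+2z³+1)` with `α⁶ ≠ 1`, the critical points are
exactly `1, j, j², α²` (roots of the Wronskian, each simple), with critical values
`1, j², j, (α⁴+2α)/(2α³+1)`. -/
theorem critical_points_of_h_alpha (α : ℂ) (hα : α ^ 6 ≠ 1)
    (j : ℂ) (hj : j = Complex.exp (2 * Real.pi * Complex.I / 3)) :
    letI p : Polynomial ℂ := C α * (X ^ 3 + C 2) + C 3 * X ^ 2
    letI q : Polynomial ℂ := C 3 * C α * X + C 2 * X ^ 3 + 1
    letI h : ℂ → ℂ := fun z => (α * (z ^ 3 + 2) + 3 * z ^ 2) / (3 * α * z + 2 * z ^ 3 + 1)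
    (p.derivative * q - q.derivative * p =
        C (-6) * (X - C 1) * (X - C j) * (X - C (j ^ 2)) * (X - C (α ^ 2))) ∧
      ([(1 : ℂ), j, j ^ 2, α ^ 2].Pairwise (· ≠ ·)) ∧
      h 1 = 1 ∧ h j = j ^ 2 ∧ h (j ^ 2) = j ∧
      h (α ^ 2) = (α ^ 4 + 2 * α) / (2 * α ^ 3 + 1) := by
  have hprim : IsPrimitiveRoot j 3 := by
    rw [hj]; exact Complex.isPrimitiveRoot_exp 3 (by norm_num)
  have hj3 : j ^ 3 = 1 := hprim.pow_eq_one
  have hj1 : j ≠ 1 := hprim.ne_one (by norm_num)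
  have hj0 : j ≠ 0 := hprim.ne_zero (by norm_num)
  have hsum : j ^ 2 + j + 1 = 0 := by
    have h2 : (j - 1) * (j ^ 2 + j + 1) = 0 := by linear_combination hj3
    rcases mul_eq_zero.1 h2 with h | h
    · exact absurd (sub_eq_zero.1 h) hj1
    · exact h
  refine ⟨?_, ?_, ?_, ?_, ?_, ?_⟩
  · have hC3 : (C j : ℂ[X]) ^ 3 = 1 := by rw [← C_pow, hj3, map_one]
    have hCs : (C j : ℂ[X]) ^ 2 + C j + 1 = 0 := by
      have := congrArg (C : ℂ → ℂ[X]) hsum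
      simpa [C_pow] using this
    simp only [derivative_add, derivative_mul, derivative_C, derivative_X_pow,
      derivative_X, derivative_one, derivative_ofNat, map_pow, map_ofNat, map_one,
      map_neg, Polynomial.C_eq_natCast, Nat.cast_ofNat]
    linear_combination (-6 * (X - C α ^ 2) * (X ^ 2 - X)) * hCs +
      (6 * (X - C α ^ 2) * (X - 1)) * hC3
  · have hA1 : α ^ 2 ≠ 1 := fun h => hα (by rw [show (6:ℕ) = 2*3 by rfl, pow_mul, h, one_pow])
    have hAj : α ^ 2 ≠ j := fun h => hα (by
      rw [show (6:ℕ) = 2*3 by rfl, pow_mul, h, hj3])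
    have hAj2 : α ^ 2 ≠ j ^ 2 := fun h => hα (by
      rw [show (6:ℕ) = 2*3 by rfl, pow_mul, h, ← pow_mul, mul_comm, pow_mul, hj3, one_pow])
    have hjj2 : j ≠ j ^ 2 := fun h =>
      hj1 (mul_left_cancel₀ hj0 (by linear_combination h : j * 1 = j * j)).symm
    have hj21 : j ^ 2 ≠ 1 := fun h => by
      have h2 : (j - 1) * (j + 1) = 0 := by linear_combination h
      rcases mul_eq_zero.1 h2 with h' | h'
      · exact hj1 (sub_eq_zero.1 h')
      · exact two_ne_zero (by linear_combination (j ^ 2 - j + 1) * h' - hj3 : (2:ℂ) = 0)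
    simp only [List.pairwise_cons, List.mem_cons, List.mem_singleton, List.not_mem_nil,
      forall_eq_or_imp, forall_eq, or_false, false_implies, implies_true, and_true,
      List.Pairwise.nil]
    exact ⟨⟨hj1.symm, hj21.symm, hA1.symm⟩, ⟨hjj2, hAj.symm⟩, hAj2.symm⟩
  · show (α * (1 ^ 3 + 2) + 3 * 1 ^ 2) / (3 * α * 1 + 2 * 1 ^ 3 + 1) = 1
    have hαm1 : α + 1 ≠ 0 := fun h => hα (by
      have hα1 : α = -1 := by linear_combination h
      rw [hα1]; norm_num)
    have hd : 3 * α * 1 + 2 * 1 ^ 3 + 1 ≠ 0 := by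
      intro h; apply hαm1; linear_combination h / 3
    rw [div_eq_iff hd]; ring
  · show (α * (j ^ 3 + 2) + 3 * j ^ 2) / (3 * α * j + 2 * j ^ 3 + 1) = j ^ 2
    have hd0 : α * j + 1 ≠ 0 := by
      intro h
      apply hα
      have hαj : α * j = -1 := by linear_combination h
      have h6 : α ^ 6 * j ^ 6 = 1 := by rw [← mul_pow, hαj]; norm_num
      linear_combination h6 - α ^ 6 * (j ^ 3 + 1) * hj3
    have hd : 3 * α * j + 2 * j ^ 3 + 1 ≠ 0 := by
      intro h; apply hd0; rw [hj3] at h; linear_combination h / 3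
    rw [div_eq_iff hd]
    linear_combination (-2 * α - 2 * j ^ 2) * hj3
  · show (α * ((j ^ 2) ^ 3 + 2) + 3 * (j ^ 2) ^ 2) / (3 * α * j ^ 2 + 2 * (j ^ 2) ^ 3 + 1) = j
    have hd0 : α * j ^ 2 + 1 ≠ 0 := by
      intro h
      apply hα
      have hαj : α * j ^ 2 = -1 := by linear_combination h
      have h6 : α ^ 6 * j ^ 12 = 1 := by
        rw [show α ^ 6 * j ^ 12 = (α * j ^ 2) ^ 6 from by ring, hαj]; norm_num
      linear_combination h6 - α ^ 6 * (j ^ 9 + j ^ 6 + j ^ 3 + 1) * hj3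
    have hj6 : (j ^ 2) ^ 3 = 1 := by rw [← pow_mul, mul_comm, pow_mul, hj3, one_pow]
    have hd : 3 * α * j ^ 2 + 2 * (j ^ 2) ^ 3 + 1 ≠ 0 := by
      intro h; apply hd0; rw [hj6] at h; linear_combination h / 3
    rw [div_eq_iff hd]
    linear_combination (α * (j ^ 3 - 2) - j * (2 * j ^ 3 - 1)) * hj3
  · show (α * ((α ^ 2) ^ 3 + 2) + 3 * (α ^ 2) ^ 2) / (3 * α * α ^ 2 + 2 * (α ^ 2) ^ 3 + 1) =
      (α ^ 4 + 2 * α) / (2 * α ^ 3 + 1)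
    have hc : α ^ 3 + 1 ≠ 0 := by
      intro h
      apply hα
      have h3 : α ^ 3 = -1 := by linear_combination h
      calc α ^ 6 = (α ^ 3) ^ 2 := by ring
        _ = 1 := by rw [h3]; norm_num
    have hnum : α * ((α ^ 2) ^ 3 + 2) + 3 * (α ^ 2) ^ 2 = (α ^ 3 + 1) * (α ^ 4 + 2 * α) := by
      ring
    have hden : 3 * α * α ^ 2 + 2 * (α ^ 2) ^ 3 + 1 = (α ^ 3 + 1) * (2 * α ^ 3 + 1) := by
      ring
    rw [hnum, hden, mul_div_mul_left _ _ hc]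
end

section
/- With the Wronskian map (a₀,a₁,b₀,b₁) ↦ (w₀,w₁,w₂,w₃) = (a₁b₀ - a₀b₁, -2a₀, 3b₀ - a₁, 2b₁): a point (w₀,w₁,w₂,w₃) ∈ ℂ⁴ has exactly two preimages if w₂² + 12w₀ - 3w₁w₃ ≠ 0, and exactly one preimage if w₂² + 12w₀ - 3w₁w₃ = 0. Moreover a preimage satisfies a₁ + 3b₀ = 0 precisely in the latter case. -/
/-!
Writing `a = (a₀, a₁, b₀, b₁)`, the last three coordinates of `W a = w` are linear and determine
`a₀`, `b₁` and `3b₀ - a₁`, so a preimage is fixed by the single unknown `t = a₁ + 3b₀`. The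
remaining equation `a₁b₀ - a₀b₁ = w₀` then reads `t² = D` with `D = w₂² + 12w₀ - 3w₁w₃`,
whose solutions over `ℂ` are `±√D`: two of them unless `D = 0`.
-/

namespace Wronskian

variable {K : Type*}

def map [CommRing K] (a : Fin 4 → K) : Fin 4 → K :=
  ![a 1 * a 2 - a 0 * a 3, -2 * a 0, 3 * a 2 - a 1, 2 * a 3]

def disc [CommRing K] (w : Fin 4 → K) : K :=
  w 2 ^ 2 + 12 * w 0 - 3 * w 1 * w 3

/-- The candidate preimage of `w` with `a₁ + 3b₀ = t`. -/
def solution [Field K] (w : Fin 4 → K) (t : K) : Fin 4 → K :=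
  ![-w 1 / 2, (-w 2 + t) / 2, (w 2 + t) / 6, w 3 / 2]

theorem disc_map [CommRing K] (a : Fin 4 → K) : disc (map a) = (a 1 + 3 * a 2) ^ 2 := by
  simp only [disc, map, Matrix.cons_val, Matrix.cons_val_zero, Matrix.cons_val_one]
  ring

section Field

theorem six_ne_zero_of [Field K] (h2 : (2 : K) ≠ 0) (h3 : (3 : K) ≠ 0) : (6 : K) ≠ 0 := by
  simpa [show (6 : K) = 2 * 3 by norm_num] using mul_ne_zero h2 h3

variable [Field K] (h2 : (2 : K) ≠ 0) (h3 : (3 : K) ≠ 0)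
include h2 h3

theorem solution_one_add_three_mul_solution_two (w : Fin 4 → K) (t : K) :
    solution w t 1 + 3 * solution w t 2 = t := by
  have h6 : (6 : K) ≠ 0 := six_ne_zero_of h2 h3
  simp only [solution, Matrix.cons_val, Matrix.cons_val_zero, Matrix.cons_val_one]
  field_simp
  ring

theorem solution_injective (w : Fin 4 → K) : Function.Injective (solution w) := fun s t hst => by
  rw [← solution_one_add_three_mul_solution_two h2 h3 w s,
    ← solution_one_add_three_mul_solution_two h2 h3 w t, hst]

theorem eq_solution_of_map_eq {a w : Fin 4 → K} (h : map a = w) :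
    a = solution w (a 1 + 3 * a 2) := by
  have h6 : (6 : K) ≠ 0 := six_ne_zero_of h2 h3
  subst h
  ext i
  fin_cases i <;> simp [map, solution] <;> field_simp <;> ring

theorem map_solution_eq_iff (w : Fin 4 → K) (t : K) : map (solution w t) = w ↔ t ^ 2 = disc w := by
  have h6 : (6 : K) ≠ 0 := six_ne_zero_of h2 h3
  constructor
  · intro h
    have h0 := congrFun h 0
    simp only [map, solution, Matrix.cons_val, Matrix.cons_val_zero, Matrix.cons_val_one] at h0
    field_simp at h0
    refine mul_left_cancel₀ h2 ?_
    simp only [disc]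
    linear_combination h0
  · intro ht
    ext i
    fin_cases i <;> simp [map, solution] <;> field_simp
    · simp only [disc] at ht
      linear_combination 2 * ht
    all_goals ring

theorem map_preimage_singleton (w : Fin 4 → K) :
    map ⁻¹' {w} = solution w '' {t | t ^ 2 = disc w} := by
  ext a
  constructor
  · intro h
    refine ⟨a 1 + 3 * a 2, ?_, (eq_solution_of_map_eq h2 h3 h).symm⟩
    rw [Set.mem_ofPred_eq, ← h, disc_map]
  · rintro ⟨t, ht, rfl⟩
    exact (map_solution_eq_iff h2 h3 w t).mpr ht

end Field

end Wronskian

theorem ncard_setOf_sq_eq {K : Type*} [Field K] [DecidableEq K] (h2 : (2 : K) ≠ 0) {s d : K}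
    (hs : s ^ 2 = d) : {t : K | t ^ 2 = d}.ncard = if d = 0 then 1 else 2 := by
  have hset : {t : K | t ^ 2 = d} = {s, -s} := by
    ext t
    simp [← hs, sq_eq_sq_iff_eq_or_eq_neg]
  rw [hset]
  split_ifs with hd
  · simp [pow_eq_zero_iff two_ne_zero |>.mp (hs.trans hd)]
  · refine Set.ncard_pair fun h => hd ?_
    have hs0 : s = 0 := by simpa [h2] using (by linear_combination h : 2 * s = 0)
    rw [← hs, hs0, zero_pow two_ne_zero]

/-- For the Wronskian map `(a₀,a₁,b₀,b₁) ↦ (a₁b₀ - a₀b₁, -2a₀, 3b₀ - a₁, 2b₁)`,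
a point `w` has exactly two preimages if `w₂² + 12w₀ - 3w₁w₃ ≠ 0` and exactly one if
`w₂² + 12w₀ - 3w₁w₃ = 0`; moreover a preimage satisfies `a₁ + 3b₀ = 0` precisely in the
latter case. -/
theorem preimage_count_of_wronskian_operator (w : Fin 4 → ℂ) :
    letI W : (Fin 4 → ℂ) → Fin 4 → ℂ := fun a =>
      ![a 1 * a 2 - a 0 * a 3, -2 * a 0, 3 * a 2 - a 1, 2 * a 3]
    (W ⁻¹' {w}).ncard
        = (if w 2 ^ 2 + 12 * w 0 - 3 * w 1 * w 3 = 0 then 1 else 2) ∧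
      ∀ a : Fin 4 → ℂ, W a = w →
        (a 1 + 3 * a 2 = 0 ↔ w 2 ^ 2 + 12 * w 0 - 3 * w 1 * w 3 = 0) := by
  change (Wronskian.map ⁻¹' {w}).ncard = (if Wronskian.disc w = 0 then 1 else 2) ∧
    ∀ a, Wronskian.map a = w → (a 1 + 3 * a 2 = 0 ↔ Wronskian.disc w = 0)
  have h2 : (2 : ℂ) ≠ 0 := two_ne_zero
  have h3 : (3 : ℂ) ≠ 0 := three_ne_zero
  obtain ⟨s, hs⟩ := IsAlgClosed.exists_pow_nat_eq (Wronskian.disc w) two_pos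
  refine ⟨?_, fun a ha => ?_⟩
  · rw [Wronskian.map_preimage_singleton h2 h3,
      Set.ncard_image_of_injective _ (Wronskian.solution_injective h2 h3 w),
      ncard_setOf_sq_eq h2 hs]
  · rw [← ha, Wronskian.disc_map, sq_eq_zero_iff]
end

section
/- Let w(z) = z⁴ + w₃z³ + w₂z² + w₁z + w₀ have four distinct roots r₁, r₂, r₃, r₄ whose cross ratio Δ = [r₁,r₂,r₃,r₄] belongs to {-j, -j²} where j = e^{2πi/3} (equivalently, the roots form a regular ideal tetrahedron). Then w₂² + 12w₀ - 3w₁w₃ = 0. Conversely, if w₂² + 12w₀ - 3w₁w₃ = 0 and the roots are distinct, then the cross ratio of the roots lies in {-j, -j²}. -/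
/-!
With `X = (r₀ - r₂)(r₁ - r₃)` and `Y = (r₂ - r₁)(r₃ - r₀)`, so that `Δ = X / Y`, the
expression `w₂² + 12w₀ - 3w₁w₃` is the binary form `X² - XY + Y² = Y² (Δ² - Δ + 1)`, and
the roots of `Δ² - Δ + 1` are `-j` and `-j²`.
-/

theorem IsPrimitiveRoot.sq_sub_self_add_one_eq_zero_iff {R : Type*} [CommRing R] [IsDomain R]
    {j : R} (hj : IsPrimitiveRoot j 3) (x : R) :
    x ^ 2 - x + 1 = 0 ↔ x = -j ∨ x = -j ^ 2 := by
  have hsum : ∑ i ∈ Finset.range 3, j ^ i = 0 := hj.geom_sum_eq_zero (by norm_num)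
  simp only [Finset.sum_range_succ, Finset.sum_range_zero, zero_add, pow_zero, pow_one] at hsum
  have hfactor : x ^ 2 - x + 1 = (x + j) * (x + j ^ 2) := by
    linear_combination -x * hsum - hj.pow_eq_one
  rw [hfactor, mul_eq_zero, add_eq_zero_iff_eq_neg, add_eq_zero_iff_eq_neg]

theorem sq_sub_mul_add_sq_eq_zero_iff {K : Type*} [Field K] {x y : K} (hy : y ≠ 0) :
    x ^ 2 - x * y + y ^ 2 = 0 ↔ (x / y) ^ 2 - x / y + 1 = 0 := by
  have hscale : x ^ 2 - x * y + y ^ 2 = y ^ 2 * ((x / y) ^ 2 - x / y + 1) := by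
    field_simp
  rw [hscale, mul_eq_zero, or_iff_right (pow_ne_zero 2 hy)]

theorem quartic_coeff_relation_eq_cross_ratio_form {R : Type*} [CommRing R] (a b c d : R) :
    (a * b + a * c + a * d + b * c + b * d + c * d) ^ 2 + 12 * (a * b * c * d)
        - 3 * -(a * b * c + a * b * d + a * c * d + b * c * d) * -(a + b + c + d)
      = ((a - c) * (b - d)) ^ 2 - (a - c) * (b - d) * ((c - b) * (d - a))
        + ((c - b) * (d - a)) ^ 2 := by
  ring

/-- Let `w(z) = z⁴ + w₃z³ + w₂z² + w₁z + w₀` have four distinct roots with cross ratio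
`Δ`. Then `Δ ∈ {-j, -j²}` (`j = e^{2πi/3}`, i.e. the roots form a regular ideal
tetrahedron) if and only if `w₂² + 12w₀ - 3w₁w₃ = 0`. -/
theorem regular_tetrahedron_iff_discriminant_relation
    (r : Fin 4 → ℂ) (hr : Function.Injective r)
    (j : ℂ) (hj : j = Complex.exp (2 * Real.pi * Complex.I / 3))
    (w₀ w₁ w₂ w₃ Δ : ℂ)
    (hw₃ : w₃ = -(r 0 + r 1 + r 2 + r 3))
    (hw₂ : w₂ = r 0 * r 1 + r 0 * r 2 + r 0 * r 3 + r 1 * r 2 + r 1 * r 3 + r 2 * r 3)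
    (hw₁ : w₁ = -(r 0 * r 1 * r 2 + r 0 * r 1 * r 3 + r 0 * r 2 * r 3 + r 1 * r 2 * r 3))
    (hw₀ : w₀ = r 0 * r 1 * r 2 * r 3)
    (hΔ : Δ = (r 0 - r 2) * (r 1 - r 3) / ((r 2 - r 1) * (r 3 - r 0))) :
    (Δ = -j ∨ Δ = -j ^ 2) ↔ w₂ ^ 2 + 12 * w₀ - 3 * w₁ * w₃ = 0 := by
  have hprim : IsPrimitiveRoot j 3 := by
    simpa [hj] using Complex.isPrimitiveRoot_exp 3 (by norm_num)
  have hden : (r 2 - r 1) * (r 3 - r 0) ≠ 0 :=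
    mul_ne_zero (sub_ne_zero.mpr (hr.ne (by decide))) (sub_ne_zero.mpr (hr.ne (by decide)))
  rw [← hprim.sq_sub_self_add_one_eq_zero_iff, hΔ, ← sq_sub_mul_add_sq_eq_zero_iff hden,
    hw₀, hw₁, hw₂, hw₃, quartic_coeff_relation_eq_cross_ratio_form]
end
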